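/- Let G be a finite abelian group of order n ≥ 2 and let t be a positive integer. Then G contains a t-independent set of size ⌊(n / (2·σ(G,t)))^(1/t)⌋, where σ(G,t) = Σ_{h=1}^{t} |{x ∈ G : hx = 0}|; that is, s(G,t) ≥ ⌊(n / (2·σ(G,t)))^(1/t)⌋. -/

import Mathlib

/-- A subset `A` of an (additive) abelian group is `t`-independent if whenever
`λ₁a₁ + ⋯ + λₘaₘ = 0` with `a₁, …, aₘ` the (distinct) elements of `A` and
`|λ₁| + ⋯ + |λₘ| ≤ t`, all coefficients `λᵢ` vanish. -/
def IsTIndep {G : Type*} [AddCommGroup G] (t : ℕ) (A : Finset G) : Prop :=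
  ∀ c : G → ℤ, (∀ x ∉ A, c x = 0) →
    (∑ x ∈ A, |c x|) ≤ (t : ℤ) →
    (∑ x ∈ A, c x • x) = 0 → ∀ x, c x = 0

/-- `sIndep G t` is the maximum size of a `t`-independent subset of `G`
(it is `0` if `G` has no nonempty `t`-independent subset, since `∅` is
`t`-independent). -/
noncomputable def sIndep (G : Type*) [AddCommGroup G] (t : ℕ) : ℕ :=
  sSup {m | ∃ A : Finset G, IsTIndep t A ∧ A.card = m}

/-
Greedy construction. If `A` is `t`-independent and `insert x A` is not, then some `l • x`
with `1 ≤ l ≤ t` equals an integer combination of `A` with `ℓ¹`-norm at most `t - l`.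
For fixed `l` and coefficients the solutions `x` form a coset of `Tor(G, l)` or are absent,
and there are fewer than `2 (|A| + 1) ^ (t - l)` coefficient vectors. So if `A` is a largest
`t`-independent set, of size `s`, these "blocked" elements together with `A` cover `G`,
whence `|G| < 2 σ(G, t) (s + 1) ^ t`, which is the claim after taking `t`-th roots.
-/

open Finset

lemma sum_Icc_pow_sub_natAbs_le (M s : ℕ) :
    ∑ v ∈ Icc (-(s : ℤ)) s, M ^ (s - v.natAbs) ≤ (M + 1) ^ s + s := by
  induction s with
  | zero => simp
  | succ s ih =>
    have hIcc : Icc (-((s + 1 : ℕ) : ℤ)) (s + 1 : ℕ) =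
        insert (-(s + 1 : ℤ)) (insert (s + 1 : ℤ) (Icc (-(s : ℤ)) s)) := by
      ext v; simp only [mem_Icc, mem_insert]; omega
    have hinner : ∑ v ∈ Icc (-(s : ℤ)) s, M ^ (s + 1 - v.natAbs) =
        M * ∑ v ∈ Icc (-(s : ℤ)) s, M ^ (s - v.natAbs) := by
      rw [mul_sum]
      refine sum_congr rfl fun v hv => ?_
      rw [mem_Icc] at hv
      rw [show s + 1 - v.natAbs = s - v.natAbs + 1 by omega, pow_succ, mul_comm]
    have hbern : 1 + s * M ≤ (M + 1) ^ s :=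
      add_comm 1 M ▸ one_add_le_pow_of_two_add_nonneg (by positivity) s
    rw [hIcc, sum_insert (by simp; omega), sum_insert (by simp), hinner]
    have habs : (-(s + 1 : ℤ)).natAbs = s + 1 := by omega
    have habs' : ((s : ℤ) + 1).natAbs = s + 1 := by omega
    rw [habs, habs', Nat.sub_self, pow_zero, pow_succ]
    nlinarith

section L1Ball

noncomputable def l1Ball (ι : Type*) [Fintype ι] [DecidableEq ι] (s : ℕ) :
    Finset (ι → ℤ) :=
  {d ∈ Fintype.piFinset fun _ => Icc (-(s : ℤ)) s | ∑ i, |d i| ≤ s}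

variable {ι : Type*} [Fintype ι] [DecidableEq ι]

lemma mem_l1Ball {s : ℕ} {d : ι → ℤ} : d ∈ l1Ball ι s ↔ ∑ i, |d i| ≤ s := by
  refine mem_filter.trans (and_iff_right_of_imp fun h => Fintype.mem_piFinset.mpr fun i => ?_)
  have hi := (single_le_sum (fun j _ => abs_nonneg (d j)) (mem_univ i)).trans h
  exact mem_Icc.mpr (abs_le.mp hi)

lemma card_l1Ball_succ_le (m s : ℕ) :
    #(l1Ball (Fin (m + 1)) s) ≤
      ∑ v ∈ Icc (-(s : ℤ)) s, #(l1Ball (Fin m) (s - v.natAbs)) := by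
  have hmaps : Set.MapsTo (fun d : Fin (m + 1) → ℤ => d 0) (l1Ball (Fin (m + 1)) s)
      (Icc (-(s : ℤ)) s) := by
    intro d hd
    rw [mem_coe, mem_l1Ball, Fin.sum_univ_succ] at hd
    have := sum_nonneg fun (i : Fin m) (_ : i ∈ univ) => abs_nonneg (d i.succ)
    exact mem_Icc.mpr (abs_le.mp (by linarith))
  rw [card_eq_sum_card_fiberwise hmaps]
  refine sum_le_sum fun v hv =>
    card_le_card_of_injOn Fin.tail (fun d hd => ?_) fun d hd d' hd' h => ?_
  · simp only [coe_filter, mem_l1Ball, Fin.sum_univ_succ] at hd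
    obtain ⟨hd, rfl⟩ := hd
    have hv : ((d 0).natAbs : ℤ) ≤ s :=
      Int.natCast_natAbs (d 0) ▸ abs_le.mpr (mem_Icc.mp hv)
    rw [mem_coe, mem_l1Ball, Int.natCast_sub (by omega), Int.natCast_natAbs]
    simp only [Fin.tail]
    linarith
  · simp only [mem_coe, mem_filter] at hd hd'
    rw [← Fin.cons_self_tail d, ← Fin.cons_self_tail d', hd.2, hd'.2, h]

lemma card_l1Ball_fin_lt (m s : ℕ) : #(l1Ball (Fin m) s) < 2 * (m + 1) ^ s := by
  induction m generalizing s with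
  | zero =>
    have : #(l1Ball (Fin 0) s) ≤ 1 := card_le_one.mpr fun a _ b _ => funext fun i => i.elim0
    simp only [zero_add, one_pow]
    omega
  | succ m ih =>
    have hsum : ∑ v ∈ Icc (-(s : ℤ)) s, (#(l1Ball (Fin m) (s - v.natAbs)) + 1) ≤
        ∑ v ∈ Icc (-(s : ℤ)) s, 2 * (m + 1) ^ (s - v.natAbs) := sum_le_sum fun v _ => ih _
    rw [sum_add_distrib, ← mul_sum, sum_const, Int.card_Icc, smul_eq_mul, mul_one] at hsum
    have := card_l1Ball_succ_le m s
    have := sum_Icc_pow_sub_natAbs_le (m + 1) s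
    omega

theorem card_l1Ball_lt (s : ℕ) : #(l1Ball ι s) < 2 * (Fintype.card ι + 1) ^ s := by
  let e := (Fintype.equivFin ι).arrowCongr (Equiv.refl ℤ)
  rw [card_equiv e (t := l1Ball (Fin (Fintype.card ι)) s) fun d => by
    simp [e, mem_l1Ball, Function.comp_def, (Fintype.equivFin ι).symm.sum_comp (|d ·|)]]
  exact card_l1Ball_fin_lt _ s

end L1Ball

section Blocked

noncomputable def torsionSum (G : Type*) [AddCommGroup G] (t : ℕ) : ℕ :=
  ∑ h ∈ Icc 1 t, Nat.card {x : G // h • x = 0}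

variable {G : Type*} [AddCommGroup G]

lemma torsionSum_pos [Finite G] {t : ℕ} (ht : 0 < t) : 0 < torsionSum G t := by
  have : Nonempty {x : G // 1 • x = 0} := ⟨⟨0, smul_zero 1⟩⟩
  exact lt_of_lt_of_le Nat.card_pos
    (single_le_sum (f := fun h => Nat.card {x : G // h • x = 0}) (fun _ _ => Nat.zero_le _)
      (mem_Icc.mpr ⟨le_rfl, ht⟩))

variable [Fintype G] [DecidableEq G]

lemma card_nsmul_add_eq_zero_le (l : ℕ) (g : G) :
    #{x | l • x + g = 0} ≤ Nat.card {x : G // l • x = 0} := by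
  set f := nsmulAddMonoidHom (α := G) l
  calc #{x | l • x + g = 0} = #{x | f x = -g} := by
        simp only [f, nsmulAddMonoidHom_apply, add_eq_zero_iff_eq_neg]
    _ ≤ #{x | f x = 0} := by
        by_cases hg : -g ∈ Set.range f
        · rw [AddMonoidHom.card_fiber_eq_of_mem_range f hg ⟨0, map_zero f⟩]
        · rw [card_eq_zero.mpr (filter_eq_empty_iff.mpr fun x _ h => hg ⟨x, h⟩)]
          exact Nat.zero_le _
    _ = Nat.card {x : G // l • x = 0} := by
        rw [Nat.card_eq_fintype_card, Fintype.card_subtype]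
        rfl

noncomputable def blocked (t : ℕ) (A : Finset G) : Finset G :=
  (Icc 1 t).biUnion fun l => (l1Ball A (t - l)).biUnion fun d =>
    {x | l • x + ∑ a, d a • (a : G) = 0}

lemma mem_blocked {t : ℕ} {A : Finset G} {x : G} :
    x ∈ blocked t A ↔
      ∃ l ∈ Icc 1 t, ∃ d ∈ l1Ball A (t - l), l • x + ∑ a, d a • (a : G) = 0 := by
  simp only [blocked, mem_biUnion, mem_filter, mem_univ, true_and]

lemma IsTIndep.insert {t : ℕ} {A : Finset G} {x : G} (hA : IsTIndep t A)
    (hx : x ∉ blocked t A) : IsTIndep t (insert x A) := by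
  intro c hc habs hsum
  by_cases hxA : x ∈ A
  · rw [insert_eq_of_mem hxA] at habs hsum hc
    exact hA c hc habs hsum
  rw [sum_insert hxA] at habs hsum
  by_cases hcx : c x = 0
  · refine hA c (fun z hz => ?_) (by simpa [hcx] using habs) (by simpa [hcx] using hsum)
    obtain rfl | hzx := eq_or_ne z x
    · exact hcx
    · exact hc z (by simp [hzx, hz])
  have hl : (c x).natAbs ≤ t := by
    have := (le_add_of_nonneg_right (sum_nonneg fun z _ => abs_nonneg (c z))).trans habs
    rw [← Int.natCast_natAbs] at this
    exact_mod_cast this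
  -- multiplying the relation by `sign (c x)` makes the coefficient of `x` positive
  refine absurd (mem_blocked.mpr ⟨(c x).natAbs, mem_Icc.mpr ⟨Int.natAbs_pos.mpr hcx, hl⟩,
    fun a => (c x).sign * c a, ?_, ?_⟩) hx
  · rw [mem_l1Ball, Int.natCast_sub hl, Int.natCast_natAbs]
    simp only [abs_mul, Int.abs_sign_of_ne_zero hcx, one_mul]
    rw [sum_coe_sort A fun z => |c z|]
    linarith
  · rw [← natCast_zsmul, Int.natCast_natAbs, ← Int.sign_mul_self_eq_abs,
      sum_coe_sort A fun z => ((c x).sign * c z) • z]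
    simp only [mul_smul, ← smul_sum, ← smul_add, hsum, smul_zero]

lemma card_blocked_add_torsionSum_le (t : ℕ) (A : Finset G) :
    #(blocked t A) + torsionSum G t ≤ 2 * (#A + 1) ^ (t - 1) * torsionSum G t := by
  have hball : ∀ l ∈ Icc 1 t, #(l1Ball A (t - l)) + 1 ≤ 2 * (#A + 1) ^ (t - 1) := fun l hl =>
    calc #(l1Ball A (t - l)) + 1 ≤ 2 * (#A + 1) ^ (t - l) :=
          Fintype.card_coe A ▸ card_l1Ball_lt (t - l)
      _ ≤ 2 * (#A + 1) ^ (t - 1) := by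
          gcongr
          · omega
          · exact (mem_Icc.mp hl).1
  calc #(blocked t A) + torsionSum G t ≤ ∑ l ∈ Icc 1 t, (#(l1Ball A (t - l)) *
        Nat.card {x : G // l • x = 0} + Nat.card {x : G // l • x = 0}) := by
        rw [sum_add_distrib]
        gcongr ?_ + _
        refine card_biUnion_le.trans (sum_le_sum fun l _ => card_biUnion_le.trans ?_)
        exact sum_le_card_nsmul _ _ _ fun d _ => card_nsmul_add_eq_zero_le l _
    _ ≤ ∑ l ∈ Icc 1 t, 2 * (#A + 1) ^ (t - 1) * Nat.card {x : G // l • x = 0} :=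
        sum_le_sum fun l hl => by nlinarith [hball l hl]
    _ = 2 * (#A + 1) ^ (t - 1) * torsionSum G t := (mul_sum ..).symm

end Blocked

section Greedy

variable {G : Type*} [AddCommGroup G]

lemma bddAbove_card_isTIndep [Finite G] (t : ℕ) :
    BddAbove {m | ∃ A : Finset G, IsTIndep t A ∧ #A = m} := by
  have := Fintype.ofFinite G
  refine ⟨Fintype.card G, fun m hm => ?_⟩
  obtain ⟨A, -, rfl⟩ := hm
  exact card_le_univ A

lemma exists_isTIndep_card_eq_sIndep [Finite G] (t : ℕ) :
    ∃ A : Finset G, IsTIndep t A ∧ #A = sIndep G t :=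
  Nat.sSup_mem (s := {m | ∃ A : Finset G, IsTIndep t A ∧ #A = m})
    ⟨0, ∅, fun _ hc _ _ x => hc x (notMem_empty x), rfl⟩ (bddAbove_card_isTIndep t)

lemma IsTIndep.card_le_sIndep [Finite G] {t : ℕ} {A : Finset G} (hA : IsTIndep t A) :
    #A ≤ sIndep G t :=
  le_csSup (bddAbove_card_isTIndep t) ⟨A, hA, rfl⟩

theorem card_lt_two_mul_torsionSum_mul_pow [Fintype G] {t : ℕ} (ht : 0 < t) :
    Fintype.card G < 2 * torsionSum G t * (sIndep G t + 1) ^ t := by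
  classical
  obtain ⟨A, hA, hcard⟩ := exists_isTIndep_card_eq_sIndep (G := G) t
  have hcover : univ ⊆ A ∪ blocked t A := fun x _ => by
    by_contra hx
    rw [mem_union, not_or] at hx
    have := (hA.insert hx.2).card_le_sIndep
    rw [card_insert_of_notMem hx.1] at this
    omega
  have hn := (card_le_card hcover).trans (card_union_le _ _)
  have hblocked := card_blocked_add_torsionSum_le t A
  have hσ := torsionSum_pos (G := G) ht
  rw [card_univ, hcard] at hn
  rw [hcard] at hblocked
  have hK := Nat.one_le_pow (t - 1) (sIndep G t + 1) (Nat.succ_pos _)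
  have hpow : (sIndep G t + 1) ^ t = (sIndep G t + 1) ^ (t - 1) * (sIndep G t + 1) := by
    rw [← pow_succ, Nat.sub_add_cancel ht]
  rw [hpow]
  nlinarith

end Greedy

theorem stmt16_general {G : Type*} [AddCommGroup G] [Fintype G]
    (t : ℕ) (ht : 0 < t) :
    ⌊((Fintype.card G : ℝ) /
        (2 * (∑ h ∈ Finset.Icc 1 t, Nat.card {x : G // h • x = 0} : ℕ))) ^
      ((1 : ℝ) / (t : ℝ))⌋₊ ≤ sIndep G t := by
  have hσ : (0 : ℝ) < 2 * (torsionSum G t : ℝ) := by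
    have := torsionSum_pos (G := G) ht
    positivity
  have hbound : (Fintype.card G : ℝ) < 2 * torsionSum G t * ((sIndep G t + 1 : ℕ) : ℝ) ^ t :=
    mod_cast card_lt_two_mul_torsionSum_mul_pow ht
  change ⌊((Fintype.card G : ℝ) / (2 * (torsionSum G t : ℝ))) ^ ((1 : ℝ) / t)⌋₊ ≤
    sIndep G t
  rw [← Nat.lt_succ_iff, Nat.floor_lt (by positivity), one_div,
    Real.rpow_inv_lt_iff_of_pos (by positivity) (by positivity) (by exact_mod_cast ht),
    div_lt_iff₀ hσ, Real.rpow_natCast, mul_comm]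
  exact hbound

theorem stmt16 {G : Type*} [AddCommGroup G] [Fintype G]
    (hn : 2 ≤ Fintype.card G) (t : ℕ) (ht : 0 < t) :
    ⌊((Fintype.card G : ℝ) /
        (2 * (∑ h ∈ Finset.Icc 1 t, Nat.card {x : G // h • x = 0} : ℕ))) ^
      ((1 : ℝ) / (t : ℝ))⌋₊ ≤ sIndep G t :=
  stmt16_general t ht
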